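/- arXiv:1207.4545 — 6 statements merged into one kernel-verified Lean document; each statement's English description precedes it below -/
import Mathlib

section
/- For every positive integer n and every complex number x, the product ∏_{k=0}^{n-1} ( e^{i(x + kπ/n)} + e^{-i(x + kπ/n)} ) equals e^{iπ(n-1)/2} · ( e^{inx} + (-1)^{n-1} e^{-inx} ). -/
/-!
Writing `θ_k = x + kπ/n`, factor `e^{iθ_k}` out of the `k`-th factor: what remains is
`1 + w ζ^k` with `w = e^{-2ix}` and `ζ = e^{-2πi/n}` a primitive `n`-th root of unity, so these
remainders multiply to `1 - (-w)^n`, while the `e^{iθ_k}` multiply to `e^{inx + iπ(n-1)/2}`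
by Gauss' summation formula.
-/

open Finset Complex
open scoped Real

theorem IsPrimitiveRoot.prod_range_sub_pow_mul {R : Type*} [CommRing R] [IsDomain R] {ζ : R}
    {n : ℕ} (hn : 0 < n) (h : IsPrimitiveRoot ζ n) (x y : R) :
    ∏ k ∈ range n, (x - ζ ^ k * y) = x ^ n - y ^ n := by
  classical
  rw [h.pow_sub_pow_eq_prod_sub_mul x y hn, Polynomial.nthRootsFinset_def, prod_eq_multiset_prod,
    prod_eq_multiset_prod, Multiset.toFinset_val, Multiset.dedup_eq_self.mpr h.nthRoots_one_nodup,
    h.nthRoots_eq (one_pow n), Multiset.map_map, range_val]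
  simp only [Function.comp_def, mul_one]

theorem Finset.sum_range_natCast_mul_two {R : Type*} [CommRing R] (n : ℕ) :
    (∑ k ∈ range n, (k : R)) * 2 = n * (n - 1) := by
  induction n with
  | zero => simp
  | succ m ih => rw [sum_range_succ, add_mul, ih]; push_cast; ring

theorem Finset.sum_range_add_natCast_mul_div {K : Type*} [Field K] [CharZero K] {n : ℕ}
    (hn : n ≠ 0) (x t : K) :
    ∑ k ∈ range n, (x + k * t / n) = n * x + t * (n - 1) / 2 := by
  have hgauss : ∑ k ∈ range n, (k : K) = n * (n - 1) / 2 := by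
    linear_combination sum_range_natCast_mul_two (R := K) n / 2
  simp only [sum_add_distrib, sum_const, card_range, nsmul_eq_mul, ← sum_div, ← sum_mul, hgauss]
  field_simp

/-- For every positive integer `n` and complex `x`,
`∏_{k=0}^{n-1} (e^{i(x + kπ/n)} + e^{-i(x + kπ/n)})
  = e^{iπ(n-1)/2} · (e^{inx} + (-1)^{n-1} e^{-inx})`. -/
theorem prod_exp_add_exp_neg (n : ℕ) (hn : 0 < n) (x : ℂ) :
    ∏ k ∈ Finset.range n,
      (Complex.exp (Complex.I * (x + (k : ℂ) * (Real.pi : ℂ) / (n : ℂ))) +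
        Complex.exp (-(Complex.I * (x + (k : ℂ) * (Real.pi : ℂ) / (n : ℂ))))) =
    Complex.exp (Complex.I * (Real.pi : ℂ) * ((n : ℂ) - 1) / 2) *
      (Complex.exp (Complex.I * (n : ℂ) * x) +
        (-1 : ℂ) ^ (n - 1) * Complex.exp (-(Complex.I * (n : ℂ) * x))) := by
  have hζ : IsPrimitiveRoot (exp (-(2 * π * I / n))) n := by
    rw [exp_neg]
    exact (isPrimitiveRoot_exp n hn.ne').inv
  set ζ := exp (-(2 * π * I / n))
  set w := exp (-(2 * I * x))
  have hfactor : ∀ k : ℕ, exp (I * (x + k * π / n)) + exp (-(I * (x + k * π / n))) =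
      exp (I * (x + k * π / n)) * (1 - ζ ^ k * -w) := by
    intro k
    rw [mul_neg, sub_neg_eq_add, mul_one_add, ← exp_nat_mul, ← exp_add, ← exp_add]
    congr 2
    ring
  have hsum : ∑ k ∈ range n, I * (x + k * π / n) = I * n * x + I * π * (n - 1) / 2 := by
    rw [← mul_sum, sum_range_add_natCast_mul_div hn.ne']
    ring
  have hw : exp (I * n * x) * w ^ n = exp (-(I * n * x)) := by
    rw [← exp_nat_mul, ← exp_add]
    ring_nf
  have hsign : (-1 : ℂ) ^ n = -(-1) ^ (n - 1) := by
    rw [← neg_one_mul ((-1 : ℂ) ^ (n - 1)), ← pow_succ', Nat.sub_add_cancel hn]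
  rw [prod_congr rfl fun k _ ↦ hfactor k, prod_mul_distrib, ← exp_sum, hsum,
    hζ.prod_range_sub_pow_mul hn, exp_add, one_pow, neg_pow, hsign]
  linear_combination exp (I * π * (n - 1) / 2) * (-1) ^ (n - 1) * hw
end

section
/- Let n be an even positive integer and let x be a complex number such that cos(x + kπ/n) ≠ 0 for every integer k with 0 ≤ k ≤ n−1. Then ∑_{k=0}^{n-1} tan(x + kπ/n) = n · tan(nx + π/2). -/
/-!
With `w = exp (2 i x)` and `ζ = exp (2 π i / n)` one has `exp (2 i (x + k π / n)) = w ζ^k` and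
`tan θ = i (2 / (1 + exp (2 i θ)) - 1)`, so everything reduces to `∑ₖ 1 / (1 + w ζ^k)`.
Expanding `1 / (1 - b ζ^k)` as a finite geometric series and summing over `k` kills every power
`ζ^m` with `0 < m < n`, which gives `∑ₖ 1 / (1 - b ζ^k) = n / (1 - bⁿ)`. For `b = -w` and `n` even,
`bⁿ = wⁿ = -exp (2 i (n x + π / 2))`, and the right-hand side appears.
-/

open Complex Finset

namespace IsPrimitiveRoot

variable {K : Type*} [Field K] {ζ : K} {n : ℕ}

theorem geom_sum_pow_eq_zero (hζ : IsPrimitiveRoot ζ n) {m : ℕ} (hm : m ≠ 0) (hmn : m < n) :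
    ∑ k ∈ range n, (ζ ^ m) ^ k = 0 := by
  refine eq_zero_of_ne_zero_of_mul_left_eq_zero
    (sub_ne_zero_of_ne (hζ.pow_ne_one_of_pos_of_lt hm hmn).symm) ?_
  rw [mul_neg_geom_sum, ← pow_mul, mul_comm, pow_mul, hζ.pow_eq_one, one_pow, sub_self]

theorem sum_inv_one_sub_mul_pow (hζ : IsPrimitiveRoot ζ n) {b : K} (hb : b ^ n ≠ 1) :
    ∑ k ∈ range n, (1 - b * ζ ^ k)⁻¹ = n / (1 - b ^ n) := by
  have hn : n ≠ 0 := by rintro rfl; exact hb (pow_zero b)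
  have hgeom (k : ℕ) : (1 - b * ζ ^ k) * ∑ m ∈ range n, b ^ m * (ζ ^ m) ^ k = 1 - b ^ n := by
    simp_rw [← pow_mul, mul_comm _ k, pow_mul, ← mul_pow, mul_neg_geom_sum, mul_pow,
      ← pow_mul, mul_comm k, pow_mul, hζ.pow_eq_one, one_pow, mul_one]
  have hterm (k : ℕ) :
      (1 - b * ζ ^ k)⁻¹ = (∑ m ∈ range n, b ^ m * (ζ ^ m) ^ k) / (1 - b ^ n) := by
    have hb' : 1 - b ^ n ≠ 0 := sub_ne_zero.2 hb.symm
    rw [eq_div_iff hb', ← hgeom k, inv_mul_cancel_left₀ (left_ne_zero_of_mul (hgeom k ▸ hb'))]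
  calc ∑ k ∈ range n, (1 - b * ζ ^ k)⁻¹
      = (∑ m ∈ range n, b ^ m * ∑ k ∈ range n, (ζ ^ m) ^ k) / (1 - b ^ n) := by
        simp_rw [hterm, ← sum_div, mul_sum]; rw [sum_comm]
    _ = n / (1 - b ^ n) := by
        rw [sum_eq_single_of_mem 0 (mem_range.2 (Nat.pos_of_ne_zero hn))
          fun m hm hm0 => by rw [hζ.geom_sum_pow_eq_zero hm0 (mem_range.1 hm), mul_zero]]
        simp

theorem exists_mul_pow_eq_one [NeZero n] (hζ : IsPrimitiveRoot ζ n) {b : K} (hb : b ^ n = 1) :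
    ∃ k < n, b * ζ ^ k = 1 := by
  obtain ⟨k, hk, hζk⟩ := hζ.eq_pow_of_pow_eq_one (ξ := b⁻¹) (by rw [inv_pow, hb, inv_one])
  exact ⟨k, hk, by rw [hζk, mul_inv_cancel₀ (IsUnit.of_pow_eq_one hb (NeZero.ne n)).ne_zero]⟩

end IsPrimitiveRoot

namespace Complex

theorem one_add_exp_two_mul_mul_I (θ : ℂ) : 1 + exp (2 * θ * I) = 2 * exp (θ * I) * cos θ := by
  rw [exp_mul_I, exp_mul_I, cos_two_mul, sin_two_mul]
  ring

theorem one_add_exp_two_mul_mul_I_ne_zero_iff {θ : ℂ} : 1 + exp (2 * θ * I) ≠ 0 ↔ cos θ ≠ 0 := by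
  rw [one_add_exp_two_mul_mul_I]
  simp [exp_ne_zero]

theorem tan_eq_I_mul_two_mul_inv_one_add_exp_sub_one {θ : ℂ} (hθ : cos θ ≠ 0) :
    tan θ = I * (2 * (1 + exp (2 * θ * I))⁻¹ - 1) := by
  have hu : exp (θ * I) ≠ 0 := exp_ne_zero _
  rw [one_add_exp_two_mul_mul_I, tan_eq_sin_div_cos]
  field_simp
  rw [mul_comm I θ, exp_mul_I]
  linear_combination I * sin_sq_add_cos_sq θ + sin θ * cos θ * I_sq

end Complex

/-- For even positive `n` and complex `x` with `cos(x + kπ/n) ≠ 0` for all `0 ≤ k ≤ n-1`,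
`∑_{k=0}^{n-1} tan(x + kπ/n) = n · tan(nx + π/2)`. -/
theorem sum_tan_eq_of_even (n : ℕ) (hn : 0 < n) (hev : Even n) (x : ℂ)
    (h : ∀ k ∈ Finset.range n, Complex.cos (x + (k : ℂ) * (Real.pi : ℂ) / (n : ℂ)) ≠ 0) :
    ∑ k ∈ Finset.range n, Complex.tan (x + (k : ℂ) * (Real.pi : ℂ) / (n : ℂ)) =
      (n : ℂ) * Complex.tan ((n : ℂ) * x + (Real.pi : ℂ) / 2) := by
  have : NeZero n := ⟨hn.ne'⟩
  have hζ := isPrimitiveRoot_exp n hn.ne'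
  set ζ := exp (2 * Real.pi * I / n)
  set b := -exp (2 * x * I)
  have hexp (k : ℕ) : 1 + exp (2 * (x + k * Real.pi / n) * I) = 1 - b * ζ ^ k := by
    rw [← exp_nat_mul, neg_mul, sub_neg_eq_add, ← exp_add]
    congr 2
    field_simp
  have hne (k : ℕ) (hk : k ∈ range n) : 1 - b * ζ ^ k ≠ 0 := by
    rw [← hexp]
    exact one_add_exp_two_mul_mul_I_ne_zero_iff.2 (h k hk)
  have hbn : b ^ n ≠ 1 := fun hb1 => by
    obtain ⟨k, hk, hbk⟩ := hζ.exists_mul_pow_eq_one hb1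
    exact hne k (mem_range.2 hk) (by rw [hbk, sub_self])
  have hR : 1 + exp (2 * (n * x + Real.pi / 2) * I) = 1 - b ^ n := by
    rw [hev.neg_pow, sub_eq_add_neg, ← mul_neg_one, ← exp_pi_mul_I, ← exp_nat_mul, ← exp_add]
    ring_nf
  have hcosR : cos (n * x + Real.pi / 2) ≠ 0 :=
    one_add_exp_two_mul_mul_I_ne_zero_iff.1 (hR ▸ sub_ne_zero.2 hbn.symm)
  calc ∑ k ∈ range n, tan (x + k * Real.pi / n)
      = ∑ k ∈ range n, I * (2 * (1 - b * ζ ^ k)⁻¹ - 1) := sum_congr rfl fun k hk => by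
        rw [tan_eq_I_mul_two_mul_inv_one_add_exp_sub_one (h k hk), hexp]
    _ = I * (2 * (n / (1 - b ^ n)) - n) := by
        rw [← mul_sum, sum_sub_distrib, ← mul_sum, hζ.sum_inv_one_sub_mul_pow hbn]
        simp
    _ = n * tan (n * x + Real.pi / 2) := by
        rw [tan_eq_I_mul_two_mul_inv_one_add_exp_sub_one hcosR, hR]
        ring
end

section
/- Let n be a positive integer, let c be an integer with 1 ≤ c ≤ n, and let t be a complex number with (1+t)^n ≠ 1. Then ∑_{b=0}^{n-1} ζ_n^{bc}/(ζ_n^b − 1 − t) = n(1+t)^{c-1} / (1 − (1+t)^n). -/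
/-- `ζ_n = exp(2πi/n)`, the standard primitive `n`-th root of unity. -/
noncomputable def zeta (n : ℕ) : ℂ := Complex.exp (2 * (Real.pi : ℂ) * Complex.I / (n : ℂ))

/-!
Since `(ζ^b)^n = 1`, the identity `z^n - w^n = (z - w) ∑ z^i w^(n-1-i)` turns `1 / (ζ^b - w)` into
`∑_i ζ^(b i) w^(n-1-i) / (1 - w^n)`. Summing over `b` first, `∑_b ζ^(b (c + i))` is `n` when
`n ∣ c + i` and `0` otherwise, and for `1 ≤ c ≤ n` only `i = n - c` survives.
-/

open Finset

variable {K : Type*} [Field K]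

theorem inv_sub_eq_geom_sum₂_div {n : ℕ} {z w : K} (hz : z ^ n = 1) (hw : w ^ n ≠ 1) :
    (z - w)⁻¹ = (∑ i ∈ range n, z ^ i * w ^ (n - 1 - i)) / (1 - w ^ n) := by
  have hzw : z - w ≠ 0 := sub_ne_zero.2 fun h => hw (h ▸ hz)
  rw [eq_div_iff (sub_ne_zero.2 hw.symm), ← hz, ← geom_sum₂_mul, mul_comm (∑ i ∈ _, _),
    inv_mul_cancel_left₀ hzw]

theorem IsPrimitiveRoot.sum_pow_mul_eq_ite {n : ℕ} {ζ : K} (hζ : IsPrimitiveRoot ζ n) (m : ℕ) :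
    ∑ b ∈ range n, ζ ^ (b * m) = if n ∣ m then (n : K) else 0 := by
  simp_rw [mul_comm _ m, pow_mul]
  split_ifs with h
  · simp [(hζ.pow_eq_one_iff_dvd m).2 h]
  · rw [geom_sum_eq (mt (hζ.pow_eq_one_iff_dvd m).1 h), ← pow_mul, mul_comm, pow_mul,
      hζ.pow_eq_one, one_pow, sub_self, zero_div]

theorem IsPrimitiveRoot.sum_pow_mul_div_pow_sub {n c : ℕ} {ζ w : K} (hζ : IsPrimitiveRoot ζ n)
    (hc1 : 1 ≤ c) (hcn : c ≤ n) (hw : w ^ n ≠ 1) :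
    ∑ b ∈ range n, ζ ^ (b * c) / (ζ ^ b - w) = n * w ^ (c - 1) / (1 - w ^ n) := by
  have hζb (b : ℕ) : (ζ ^ b) ^ n = 1 := by
    rw [← pow_mul, mul_comm, pow_mul, hζ.pow_eq_one, one_pow]
  -- `0 < c + i < 2 * n`, so the only multiple of `n` it can be is `n` itself
  have hdvd {i : ℕ} (hi : i ∈ range n) : n ∣ c + i ↔ i = n - c := by
    have := mem_range.1 hi
    refine ⟨fun h => ?_, fun h => ?_⟩
    · have := Nat.eq_of_dvd_of_lt_two_mul (by omega) h (by omega)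
      omega
    · rw [h, Nat.add_sub_cancel' hcn]
  calc ∑ b ∈ range n, ζ ^ (b * c) / (ζ ^ b - w)
      = ∑ b ∈ range n, ∑ i ∈ range n, ζ ^ (b * (c + i)) * w ^ (n - 1 - i) / (1 - w ^ n) := by
        refine sum_congr rfl fun b _ => ?_
        rw [div_eq_mul_inv, inv_sub_eq_geom_sum₂_div (hζb b) hw, mul_div_assoc', mul_sum, sum_div]
        simp_rw [← mul_assoc, ← pow_mul, ← pow_add, mul_add]
    _ = ∑ i ∈ range n, (∑ b ∈ range n, ζ ^ (b * (c + i))) * w ^ (n - 1 - i) / (1 - w ^ n) := by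
        rw [sum_comm]
        simp_rw [sum_mul, sum_div]
    _ = ∑ i ∈ range n, if i = n - c then n * w ^ (n - 1 - i) / (1 - w ^ n) else 0 := by
        refine sum_congr rfl fun i hi => ?_
        rw [hζ.sum_pow_mul_eq_ite, ← if_congr (hdvd hi) rfl rfl]
        split_ifs <;> simp
    _ = n * w ^ (c - 1) / (1 - w ^ n) := by
        rw [sum_ite_eq', if_pos (mem_range.2 (by omega)), show n - 1 - (n - c) = c - 1 by omega]

theorem sum_zeta_pow_div_zeta_pow_sub_one_sub_general (n : ℕ) (c : ℕ)
    (hc1 : 1 ≤ c) (hcn : c ≤ n) (t : ℂ) (h : (1 + t) ^ n ≠ 1) :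
    ∑ b ∈ Finset.range n, zeta n ^ (b * c) / (zeta n ^ b - 1 - t) =
      (n : ℂ) * (1 + t) ^ (c - 1) / (1 - (1 + t) ^ n) := by
  have hζ : IsPrimitiveRoot (zeta n) n := Complex.isPrimitiveRoot_exp n (by omega)
  simp_rw [sub_sub]
  exact hζ.sum_pow_mul_div_pow_sub hc1 hcn h

/-- For positive `n`, an integer `1 ≤ c ≤ n`, and `t : ℂ` with `(1+t)^n ≠ 1`,
`∑_{b=0}^{n-1} ζ_n^{bc}/(ζ_n^b − 1 − t) = n(1+t)^{c-1}/(1 − (1+t)^n)`. -/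
theorem sum_zeta_pow_div_zeta_pow_sub_one_sub (n : ℕ) (hn : 0 < n) (c : ℕ)
    (hc1 : 1 ≤ c) (hcn : c ≤ n) (t : ℂ) (h : (1 + t) ^ n ≠ 1) :
    ∑ b ∈ Finset.range n, zeta n ^ (b * c) / (zeta n ^ b - 1 - t) =
      (n : ℂ) * (1 + t) ^ (c - 1) / (1 - (1 + t) ^ n) :=
  sum_zeta_pow_div_zeta_pow_sub_one_sub_general n c hc1 hcn t h
end

section
/- Let n be a positive integer, let M = (m_1,…,m_k) be a finite list of natural numbers, and let b be an integer. Then β_M(2n, b) + β_M(2n, n+b) = 2 · β_M(n, b). -/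
/-- `β_{m_1,…,m_k}(n,b) = ∑_{a=0}^{n-1} ζ_n^{ab} ∏_j B_{m_j}(a/n)`, where
`B_m` is the `m`-th Bernoulli polynomial. -/
noncomputable def betaB (M : List ℕ) (n : ℕ) (b : ℤ) : ℂ :=
  ∑ a ∈ Finset.range n, zeta n ^ ((a : ℤ) * b) *
    (M.map fun m => (((Polynomial.bernoulli m).eval ((a : ℚ) / (n : ℚ)) : ℚ) : ℂ)).prod

/-!
Since `ζ_{2n}^n = -1`, the `a`-th terms of `β_M(2n, b)` and `β_M(2n, n+b)` differ by the
factor `(-1)^a`, so in their sum the odd `a` cancel and the even `a = 2c` are doubled.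
As `ζ_{2n}^2 = ζ_n` and `2c/2n = c/n`, the term at `a = 2c` is the `c`-th term of `β_M(n, b)`.
-/

open Finset

theorem Finset.sum_range_two_mul_one_add_neg_one_pow_mul {R : Type*} [Ring R] (n : ℕ)
    (f : ℕ → R) :
    ∑ a ∈ range (2 * n), (1 + (-1) ^ a) * f a = 2 * ∑ c ∈ range n, f (2 * c) := by
  induction n with
  | zero => simp
  | succ n ih =>
    rw [Nat.mul_succ, sum_range_succ, sum_range_succ, ih, sum_range_succ, mul_add]
    simp [pow_succ, pow_mul, one_add_one_eq_two]

lemma zeta_ne_zero (n : ℕ) : zeta n ≠ 0 := Complex.exp_ne_zero _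

lemma zeta_two_mul_sq (n : ℕ) : zeta (2 * n) ^ 2 = zeta n := by
  rw [zeta, zeta, ← Complex.exp_nat_mul]
  push_cast
  ring_nf

lemma zeta_two_mul_pow_self {n : ℕ} (hn : n ≠ 0) : zeta (2 * n) ^ n = -1 := by
  rw [zeta, ← Complex.exp_nat_mul, ← Complex.exp_pi_mul_I]
  congr 1
  push_cast
  field_simp

lemma zeta_two_mul_zpow_mul_add {n : ℕ} (hn : n ≠ 0) (a : ℕ) (b : ℤ) :
    zeta (2 * n) ^ ((a : ℤ) * (n + b)) = (-1) ^ a * zeta (2 * n) ^ ((a : ℤ) * b) := by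
  rw [mul_add, zpow_add₀ (zeta_ne_zero _), mul_comm (a : ℤ) n, zpow_mul, zpow_natCast, zpow_natCast,
    zeta_two_mul_pow_self hn]

lemma zeta_two_mul_zpow_two_mul (n c : ℕ) (b : ℤ) :
    zeta (2 * n) ^ (((2 * c : ℕ) : ℤ) * b) = zeta n ^ ((c : ℤ) * b) := by
  rw [Nat.cast_mul, Nat.cast_ofNat, mul_assoc, zpow_mul, zpow_ofNat, zeta_two_mul_sq]

lemma two_mul_div_two_mul (n c : ℕ) : ((2 * c : ℕ) : ℚ) / ((2 * n : ℕ) : ℚ) = c / n := by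
  push_cast
  exact mul_div_mul_left _ _ two_ne_zero

/-- `β_M(2n, b) + β_M(2n, n+b) = 2 · β_M(n, b)`. -/
theorem betaB_two_mul_add (n : ℕ) (hn : 0 < n) (M : List ℕ) (b : ℤ) :
    betaB M (2 * n) b + betaB M (2 * n) ((n : ℤ) + b) = 2 * betaB M n b := by
  set P : ℕ → ℂ := fun a =>
    (M.map fun m => (((Polynomial.bernoulli m).eval ((a : ℚ) / ((2 * n : ℕ) : ℚ)) : ℚ) : ℂ)).prod
  calc betaB M (2 * n) b + betaB M (2 * n) ((n : ℤ) + b)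
      = ∑ a ∈ range (2 * n), (1 + (-1) ^ a) * (zeta (2 * n) ^ ((a : ℤ) * b) * P a) := by
        rw [betaB, betaB, ← sum_add_distrib]
        refine sum_congr rfl fun a _ => ?_
        rw [zeta_two_mul_zpow_mul_add hn.ne']
        ring
    _ = 2 * ∑ c ∈ range n, zeta (2 * n) ^ (((2 * c : ℕ) : ℤ) * b) * P (2 * c) :=
        sum_range_two_mul_one_add_neg_one_pow_mul n _
    _ = 2 * betaB M n b := by
        simp only [P, betaB, zeta_two_mul_zpow_two_mul, two_mul_div_two_mul]
end

section
/- Fix natural numbers m_1,…,m_k and set m = m_1 + ⋯ + m_k. Then there exist polynomials f_0, f_1, …, f_{m-1} with rational coefficients, depending only on m_1,…,m_k, such that for every positive integer n and every integer b with 1 ≤ b ≤ n−1, β_{m_1,…,m_k}(n,b) = ∑_{i=0}^{m-1} (1/n)^i · f_i( 1/(ζ_n^b − 1) ) (if m = 0 the right-hand side is the empty sum 0). -/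
/-! Let `x = ζ_n^b`, so `x ^ n = 1` and `x ≠ 1`, and let `P = ∏ B_{m_j}`, of degree at most `m`.
Then `β = ∑_a x^a P(a/n)` is a combination of the twisted moments `T_r = ∑_a (a/n)^r x^a`,
`r ≤ m`. Multiplying `T_r` by `x` shifts `a` to `a + 1`; expanding `((a - 1)/n)^r` binomially gives
`(x - 1) T_r = ∑_{s<r} C(r,s) ((-1/n)^s + (-1/n)^(r-s) T_s)`. By induction, `T_r` is a fixed
polynomial in `u = 1/(x - 1)` and `t = 1/n` of degree `< r` in `t`, with rational coefficients. -/

open Finset Polynomial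

noncomputable def powerTwistedSum (n r : ℕ) (x : ℂ) : ℂ := ∑ a ∈ range n, ((a : ℂ) / n) ^ r * x ^ a

theorem sub_one_mul_powerTwistedSum {n : ℕ} (hn : n ≠ 0) {x : ℂ} (hx : x ^ n = 1) (r : ℕ) :
    (x - 1) * powerTwistedSum n r x = ∑ s ∈ range r, (r.choose s : ℂ) *
      ((-(n : ℂ)⁻¹) ^ s + (-(n : ℂ)⁻¹) ^ (r - s) * powerTwistedSum n s x) := by
  set τ : ℂ := -(n : ℂ)⁻¹
  set g : ℕ → ℂ := fun a => ((a : ℂ) / n + τ) ^ r * x ^ a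
  have hn' : (n : ℂ) ≠ 0 := Nat.cast_ne_zero.2 hn
  have hshift : x * powerTwistedSum n r x = ∑ a ∈ range n, g a + g n - g 0 := by
    have hg : ∀ a : ℕ, ((a : ℂ) / n) ^ r * x ^ (a + 1) = g (a + 1) := fun a => by
      simp only [g, τ]; push_cast; ring
    rw [powerTwistedSum, mul_sum]
    simp only [mul_left_comm x, ← pow_succ', hg]
    have := sum_range_succ' g n
    rw [sum_range_succ] at this
    linear_combination -this
  have hgn : g n = (1 + τ) ^ r := by simp [g, hx, hn']
  have hg0 : g 0 = τ ^ r := by simp [g]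
  have hexpand : ∑ a ∈ range n, g a =
      ∑ s ∈ range (r + 1), (r.choose s : ℂ) * τ ^ (r - s) * powerTwistedSum n s x := by
    simp only [g, add_pow, sum_mul, powerTwistedSum, mul_sum]
    rw [sum_comm]
    exact sum_congr rfl fun s _ => sum_congr rfl fun a _ => by ring
  have hboundary : (1 + τ) ^ r = ∑ s ∈ range (r + 1), (r.choose s : ℂ) * τ ^ s := by
    rw [add_comm, add_pow]
    exact sum_congr rfl fun s _ => by ring
  rw [sub_mul, one_mul, hshift, hexpand, hgn, hg0, hboundary, sum_range_succ, sum_range_succ,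
    Nat.sub_self, pow_zero, Nat.choose_self]
  simp only [mul_add, sum_add_distrib, ← mul_assoc]
  push_cast
  ring

/-- Read as a polynomial in `t = 1/n` over `ℚ[u]`, `u = 1/(x - 1)`: the recurrence
`sub_one_mul_powerTwistedSum` divided by `x - 1`. -/
noncomputable def powerTwistedSumPoly (r : ℕ) : ℚ[X][X] :=
  C X * ∑ s : Fin r, (r.choose s : ℚ[X][X]) *
    ((-X) ^ (s : ℕ) + (-X) ^ (r - s) * powerTwistedSumPoly s)

noncomputable def bivariateEval (u t : ℂ) : ℚ[X][X] →+* ℂ := eval₂RingHom (aeval u).toRingHom t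

@[simp] theorem bivariateEval_C (u t : ℂ) (p : ℚ[X]) : bivariateEval u t (C p) = aeval u p :=
  eval₂_C _ _

@[simp] theorem bivariateEval_X (u t : ℂ) : bivariateEval u t X = t :=
  eval₂_X _ _

theorem bivariateEval_powerTwistedSumPoly {n : ℕ} (hn : n ≠ 0) {x : ℂ} (hx : x ^ n = 1)
    (hx1 : x ≠ 1) (r : ℕ) :
    bivariateEval (x - 1)⁻¹ (n : ℂ)⁻¹ (powerTwistedSumPoly r) = powerTwistedSum n r x := by
  induction r using Nat.strong_induction_on with
  | _ r ih =>
    rw [powerTwistedSumPoly, Fin.sum_univ_eq_sum_range (fun s => (r.choose s : ℚ[X][X]) *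
      ((-X) ^ s + (-X) ^ (r - s) * powerTwistedSumPoly s))]
    simp only [map_mul, map_sum, map_add, map_pow, map_neg, map_natCast, bivariateEval_C,
      bivariateEval_X, aeval_X]
    rw [sum_congr rfl fun s hs => by rw [ih s (mem_range.1 hs)],
      ← sub_one_mul_powerTwistedSum hn hx, inv_mul_cancel_left₀ (sub_ne_zero.2 hx1)]

theorem mul_mem_degreeLT_of_degree_le {R : Type*} [Semiring R] {p q : R[X]} {k s : ℕ}
    (hq : q.degree ≤ k) (hp : p ∈ degreeLT R s) : q * p ∈ degreeLT R (k + s) := by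
  rw [mem_degreeLT] at hp ⊢
  calc (q * p).degree ≤ q.degree + p.degree := degree_mul_le _ _
    _ ≤ k + p.degree := add_le_add_left hq _
    _ < k + s := WithBot.add_lt_add_left WithBot.coe_ne_bot hp
    _ = ↑(k + s) := by push_cast; rfl

theorem degree_neg_X_pow_le {R : Type*} [Ring R] (k : ℕ) : ((-X : R[X]) ^ k).degree ≤ k :=
  (degree_pow_le_of_le k (degree_neg (X : R[X]) ▸ degree_X_le)).trans_eq (mul_one _)

theorem powerTwistedSumPoly_mem_degreeLT (r : ℕ) : powerTwistedSumPoly r ∈ degreeLT ℚ[X] r := by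
  induction r using Nat.strong_induction_on with
  | _ r ih =>
    rw [powerTwistedSumPoly, ← smul_eq_C_mul]
    refine Submodule.smul_mem _ _ (sum_mem fun s _ => ?_)
    rw [← nsmul_eq_mul]
    refine nsmul_mem (add_mem ?_ ?_) _
    · exact mem_degreeLT.2 ((degree_neg_X_pow_le _).trans_lt (by exact_mod_cast s.isLt))
    · simpa [Nat.sub_add_cancel s.isLt.le] using
        mul_mem_degreeLT_of_degree_le (degree_neg_X_pow_le (r - s)) (ih s s.isLt)

noncomputable def twistedSumPoly (P : ℚ[X]) : ℚ[X][X] :=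
  ∑ r ∈ range (P.natDegree + 1), C (C (P.coeff r)) * powerTwistedSumPoly r

theorem sum_pow_mul_eval_eq_bivariateEval {n : ℕ} (hn : n ≠ 0) {x : ℂ} (hx : x ^ n = 1)
    (hx1 : x ≠ 1) (P : ℚ[X]) :
    ∑ a ∈ range n, x ^ a * ((P.eval ((a : ℚ) / n) : ℚ) : ℂ) =
      bivariateEval (x - 1)⁻¹ (n : ℂ)⁻¹ (twistedSumPoly P) := by
  simp only [twistedSumPoly, map_sum, map_mul, bivariateEval_C, aeval_C,
    bivariateEval_powerTwistedSumPoly hn hx hx1, powerTwistedSum, eval_eq_sum_range, mul_sum,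
    eq_ratCast]
  rw [sum_comm]
  refine sum_congr rfl fun a _ => ?_
  push_cast
  rw [mul_sum]
  exact sum_congr rfl fun r _ => by ring

theorem twistedSumPoly_mem_degreeLT (P : ℚ[X]) : twistedSumPoly P ∈ degreeLT ℚ[X] P.natDegree :=
  sum_mem fun r hr => by
    rw [← smul_eq_C_mul]
    exact Submodule.smul_mem _ _
      (degreeLT_mono (Nat.lt_succ_iff.1 (mem_range.1 hr)) (powerTwistedSumPoly_mem_degreeLT r))

theorem eval₂_eq_sum_range_of_mem_degreeLT {R S : Type*} [Semiring R] [Semiring S] (f : R →+* S)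
    {p : R[X]} {n : ℕ} (hp : p ∈ degreeLT R n) (x : S) :
    p.eval₂ f x = ∑ i ∈ range n, f (p.coeff i) * x ^ i := by
  rcases eq_or_ne p 0 with rfl | hp0
  · simp
  · exact eval₂_eq_sum_range' f ((natDegree_lt_iff_degree_lt hp0).2 (mem_degreeLT.1 hp)) x

theorem natDegree_bernoulli_le (m : ℕ) : (Polynomial.bernoulli m).natDegree ≤ m :=
  natDegree_sum_le_of_forall_le _ _ fun _ _ => (natDegree_monomial_le _).trans (Nat.sub_le _ _)

theorem natDegree_prod_bernoulli_le (M : List ℕ) :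
    (M.map Polynomial.bernoulli).prod.natDegree ≤ M.sum :=
  (natDegree_list_prod_le _).trans <| by
    simpa [Function.comp_def] using List.sum_le_sum fun m (_ : m ∈ M) => natDegree_bernoulli_le m

theorem betaB_eq_sum_pow_mul_eval (M : List ℕ) (n b : ℕ) :
    betaB M n b = ∑ a ∈ range n,
      (zeta n ^ b) ^ a * (((M.map Polynomial.bernoulli).prod.eval ((a : ℚ) / n) : ℚ) : ℂ) := by
  refine sum_congr rfl fun a _ => ?_
  rw [← pow_mul, ← zpow_natCast, mul_comm b, Nat.cast_mul, eval_list_prod]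
  simp [Function.comp_def]

/-- Lemma 23: with `m = m_1 + ⋯ + m_k` there are polynomials `f_0,…,f_{m-1}` with rational
coefficients, depending only on `m_1,…,m_k`, such that for all `n ≥ 1` and `1 ≤ b ≤ n-1`,
`β_{m_1,…,m_k}(n,b) = ∑_{i=0}^{m-1} (1/n)^i · f_i(1/(ζ_n^b − 1))`. -/
theorem betaB_eq_poly_of_alpha (M : List ℕ) :
    ∃ f : ℕ → Polynomial ℚ,
      ∀ n : ℕ, 0 < n → ∀ b : ℕ, 1 ≤ b → b ≤ n - 1 →
        betaB M n (b : ℤ) =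
          ∑ i ∈ Finset.range M.sum,
            ((1 : ℂ) / (n : ℂ)) ^ i * Polynomial.aeval (1 / (zeta n ^ b - 1)) (f i) := by
  set P := (M.map Polynomial.bernoulli).prod
  refine ⟨(twistedSumPoly P).coeff, fun n hn b hb1 hbn => ?_⟩
  have hζ : IsPrimitiveRoot (zeta n) n := Complex.isPrimitiveRoot_exp n hn.ne'
  have hx : (zeta n ^ b) ^ n = 1 := by rw [← pow_mul, pow_mul', hζ.pow_eq_one, one_pow]
  have hx1 : zeta n ^ b ≠ 1 := hζ.pow_ne_one_of_pos_of_lt (by omega) (by omega)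
  have hdeg := degreeLT_mono (natDegree_prod_bernoulli_le M) (twistedSumPoly_mem_degreeLT P)
  rw [betaB_eq_sum_pow_mul_eval, sum_pow_mul_eval_eq_bivariateEval hn.ne' hx hx1, bivariateEval,
    coe_eval₂RingHom, eval₂_eq_sum_range_of_mem_degreeLT _ hdeg]
  simp [mul_comm]
end

section
/- Fix natural numbers k_1, k_2, k_3. Then there exists a Laurent polynomial L with complex coefficients such that for every integer n ≥ 2, ∑_{b_1=0}^{n-1} ∑_{b_2=0}^{n-1} (α_{n,b_1})^{k_1} · (α_{n,b_2})^{k_2} · (α_{n,b_1+b_2})^{k_3} = L(n). -/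
/-- `α_{n,b} = 1/(ζ_n^b − 1)` if `n ∤ b`, and `α_{n,b} = 0` if `n ∣ b`. -/
noncomputable def alphaC (n : ℕ) (b : ℤ) : ℂ :=
  if (n : ℤ) ∣ b then 0 else 1 / (zeta n ^ b - 1)

open Finset Polynomial

namespace AddChar

variable {G K : Type*} [AddCommGroup G] [Field K] {ψ : AddChar G K}

/-- At `x = 0` this is `0⁻¹ = 0`, the convention `α_{n,0} = 0`. -/
noncomputable def alpha (ψ : AddChar G K) (x : G) : K := (ψ x - 1)⁻¹

@[simp] theorem alpha_zero : ψ.alpha 0 = 0 := by simp [alpha]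

theorem map_ne_one_of_injective (hψ : Function.Injective ψ) {x : G} (hx : x ≠ 0) : ψ x ≠ 1 := by
  rw [← ψ.map_zero_eq_one]
  exact hψ.ne hx

theorem alpha_injOn (hψ : Function.Injective ψ) : Set.InjOn ψ.alpha {0}ᶜ := by
  intro x _ y _ h
  simp only [alpha, inv_inj, sub_left_inj] at h
  exact hψ h

theorem alpha_add_one (hψ : Function.Injective ψ) {x : G} (hx : x ≠ 0) :
    ψ.alpha x + 1 = ψ x * ψ.alpha x := by
  have hu := sub_ne_zero.2 (map_ne_one_of_injective hψ hx)
  simp only [alpha]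
  field_simp
  ring

theorem alpha_mul_alpha (hψ : Function.Injective ψ) {x y : G} (hx : x ≠ 0) (hy : y ≠ 0)
    (hxy : x + y ≠ 0) :
    ψ.alpha x * ψ.alpha y = ψ.alpha (x + y) * (ψ.alpha x + ψ.alpha y + 1) := by
  have hu := sub_ne_zero.2 (map_ne_one_of_injective hψ hx)
  have hv := sub_ne_zero.2 (map_ne_one_of_injective hψ hy)
  have huv := sub_ne_zero.2 (map_ne_one_of_injective hψ hxy)
  rw [ψ.map_add_eq_mul] at huv
  simp only [alpha, ψ.map_add_eq_mul]
  field_simp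
  ring

theorem alpha_mul_alpha_mul_alpha_add [DecidableEq G] (hψ : Function.Injective ψ) (x y : G) :
    ψ.alpha x * ψ.alpha y * ψ.alpha (x + y) =
      ψ.alpha (x + y) ^ 2 * (ψ.alpha x + ψ.alpha y + 1)
        - (if y = 0 then ψ.alpha x ^ 2 * (ψ.alpha x + 1) else 0)
        - (if x = 0 then ψ.alpha y ^ 2 * (ψ.alpha y + 1) else 0) := by
  rcases eq_or_ne x 0 with rfl | hx
  · split_ifs <;> simp_all
  rcases eq_or_ne y 0 with rfl | hy
  · simp [hx]
  rcases eq_or_ne (x + y) 0 with hxy | hxy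
  · simp [hx, hy, hxy]
  simp only [hx, hy, if_false, sub_zero]
  linear_combination ψ.alpha (x + y) * alpha_mul_alpha hψ hx hy hxy

variable [Fintype G]

noncomputable def powerSum (ψ : AddChar G K) (k : ℕ) : K := ∑ x, ψ.alpha x ^ k

noncomputable def tripleSum (ψ : AddChar G K) (k₁ k₂ k₃ : ℕ) : K :=
  ∑ x, ∑ y, ψ.alpha x ^ k₁ * ψ.alpha y ^ k₂ * ψ.alpha (x + y) ^ k₃

theorem tripleSum_zero_left (k₂ k₃ : ℕ) :
    ψ.tripleSum 0 k₂ k₃ = ψ.powerSum k₂ * ψ.powerSum k₃ := by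
  rw [tripleSum, sum_comm, powerSum, powerSum, sum_mul_sum]
  refine sum_congr rfl fun y _ => ?_
  simp only [pow_zero, one_mul]
  exact Fintype.sum_equiv (Equiv.addRight y) _ _ fun _ => rfl

theorem tripleSum_zero_middle (k₁ k₃ : ℕ) :
    ψ.tripleSum k₁ 0 k₃ = ψ.powerSum k₁ * ψ.powerSum k₃ := by
  rw [tripleSum, powerSum, powerSum, sum_mul_sum]
  refine sum_congr rfl fun x _ => ?_
  simp only [pow_zero, mul_one]
  exact Fintype.sum_equiv (Equiv.addLeft x) _ _ fun _ => rfl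

theorem tripleSum_zero_right (k₁ k₂ : ℕ) :
    ψ.tripleSum k₁ k₂ 0 = ψ.powerSum k₁ * ψ.powerSum k₂ := by
  simp [tripleSum, powerSum, sum_mul_sum]

/-- The factor `0 ^ b` is `1` if `b = 0` and `0` otherwise: only then do the terms with `y = 0`
contribute. -/
theorem tripleSum_succ_succ_succ [DecidableEq G] (hψ : Function.Injective ψ) (a b c : ℕ) :
    ψ.tripleSum (a + 1) (b + 1) (c + 1) =
      ψ.tripleSum (a + 1) b (c + 2) + ψ.tripleSum a (b + 1) (c + 2) + ψ.tripleSum a b (c + 2)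
        - 0 ^ b * (ψ.powerSum (a + c + 3) + ψ.powerSum (a + c + 2))
        - 0 ^ a * (ψ.powerSum (b + c + 3) + ψ.powerSum (b + c + 2)) := by
  have key (x y : G) :
      ψ.alpha x ^ (a + 1) * ψ.alpha y ^ (b + 1) * ψ.alpha (x + y) ^ (c + 1) =
        ψ.alpha x ^ (a + 1) * ψ.alpha y ^ b * ψ.alpha (x + y) ^ (c + 2)
          + ψ.alpha x ^ a * ψ.alpha y ^ (b + 1) * ψ.alpha (x + y) ^ (c + 2)
          + ψ.alpha x ^ a * ψ.alpha y ^ b * ψ.alpha (x + y) ^ (c + 2)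
          - (if y = 0 then 0 ^ b * (ψ.alpha x ^ (a + c + 3) + ψ.alpha x ^ (a + c + 2)) else 0)
          - (if x = 0 then 0 ^ a * (ψ.alpha y ^ (b + c + 3) + ψ.alpha y ^ (b + c + 2)) else 0) := by
    have h := alpha_mul_alpha_mul_alpha_add hψ x y
    split_ifs at h ⊢ with hy hx hx
    · subst hx hy
      simp
    · subst hy
      simp only [alpha_zero, add_zero] at h ⊢
      linear_combination ψ.alpha x ^ a * 0 ^ b * ψ.alpha x ^ c * h
    · subst hx
      simp only [alpha_zero, zero_add] at h ⊢
      linear_combination 0 ^ a * ψ.alpha y ^ b * ψ.alpha y ^ c * h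
    · linear_combination ψ.alpha x ^ a * ψ.alpha y ^ b * ψ.alpha (x + y) ^ c * h
  simp only [tripleSum, powerSum, key, sum_add_distrib, sum_sub_distrib, sum_ite_eq', mem_univ,
    if_true]
  rw [sum_comm (f := fun x y => if x = 0 then _ else _)]
  simp only [sum_ite_eq', mem_univ, if_true, ← mul_sum, sum_add_distrib]

end AddChar

noncomputable def alphaEsymm (K : Type*) [Field K] (n i : ℕ) : K :=
  (-1) ^ i * (n.choose (i + 1) : K) / n

namespace Polynomial

variable {K : Type*} [Field K]

noncomputable def succPowSubPow (n : ℕ) : K[X] := (X + 1) ^ n - X ^ n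

theorem coeff_succPowSubPow (n k : ℕ) :
    (succPowSubPow n : K[X]).coeff k = n.choose k - if k = n then 1 else 0 := by
  simp [succPowSubPow, coeff_X_add_one_pow, coeff_X_pow]

theorem coeff_succPowSubPow_sub_one {n : ℕ} (hn : n ≠ 0) :
    (succPowSubPow n : K[X]).coeff (n - 1) = n := by
  rw [coeff_succPowSubPow, if_neg (by omega), Nat.choose_symm_of_eq_add (b := 1) (by omega),
    Nat.choose_one_right, sub_zero]

variable [CharZero K] {n : ℕ}

theorem natDegree_succPowSubPow (hn : n ≠ 0) : (succPowSubPow n : K[X]).natDegree = n - 1 := by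
  refine natDegree_eq_of_le_of_coeff_ne_zero ?_ ?_
  · refine natDegree_le_iff_coeff_eq_zero.2 fun k hk => ?_
    rcases eq_or_ne k n with rfl | hkn
    · simp [coeff_succPowSubPow]
    · rw [coeff_succPowSubPow, if_neg hkn, Nat.choose_eq_zero_of_lt (by omega)]
      simp
  · rw [coeff_succPowSubPow_sub_one hn]
    exact_mod_cast hn

theorem leadingCoeff_succPowSubPow (hn : n ≠ 0) :
    (succPowSubPow n : K[X]).leadingCoeff = n := by
  rw [leadingCoeff, natDegree_succPowSubPow hn, coeff_succPowSubPow_sub_one hn]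

theorem succPowSubPow_ne_zero (hn : n ≠ 0) : (succPowSubPow n : K[X]) ≠ 0 := by
  rw [← leadingCoeff_ne_zero, leadingCoeff_succPowSubPow hn]
  exact_mod_cast hn

end Polynomial

namespace AddChar

variable {G K : Type*} [AddCommGroup G] [Fintype G] [Field K] {ψ : AddChar G K}

theorem isRoot_succPowSubPow_alpha (hψ : Function.Injective ψ) {x : G} (hx : x ≠ 0) :
    (succPowSubPow (Fintype.card G)).IsRoot (ψ.alpha x) := by
  have hpow : ψ x ^ Fintype.card G = 1 := by
    rw [← ψ.map_nsmul_eq_pow, card_nsmul_eq_zero, ψ.map_zero_eq_one]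
  simp [succPowSubPow, alpha_add_one hψ hx, mul_pow, hpow]

variable [DecidableEq G]

noncomputable def alphaEmb (hψ : Function.Injective ψ) : {x : G // x ≠ 0} ↪ K :=
  ⟨fun x => ψ.alpha x, fun x y h => Subtype.ext (alpha_injOn hψ x.2 y.2 h)⟩

open MvPolynomial in
theorem powerSum_eq_aeval_psum (hψ : Function.Injective ψ) {k : ℕ} (hk : k ≠ 0) :
    ψ.powerSum k = aeval (alphaEmb hψ) (psum {x : G // x ≠ 0} K k) := by
  rw [powerSum, ← sum_erase univ (a := 0) (by simp [hk])]
  simp only [psum, map_sum, map_pow, MvPolynomial.aeval_X]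
  exact sum_subtype _ (by simp) _

variable [CharZero K]

theorem roots_succPowSubPow (hψ : Function.Injective ψ) :
    (succPowSubPow (Fintype.card G) : K[X]).roots = univ.val.map (alphaEmb hψ) := by
  have hn : Fintype.card G ≠ 0 := Fintype.card_ne_zero
  rw [← map_val]
  refine roots_eq_of_degree_eq_card (fun a ha => ?_) ?_
  · obtain ⟨x, -, rfl⟩ := mem_map.1 ha
    exact isRoot_succPowSubPow_alpha hψ x.2
  · rw [degree_eq_natDegree (succPowSubPow_ne_zero hn), natDegree_succPowSubPow hn, card_map,
      card_univ]
    simp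

theorem esymm_alphaEmb (hψ : Function.Injective ψ) (i : ℕ) :
    (univ.val.map (alphaEmb hψ)).esymm i = alphaEsymm K (Fintype.card G) i := by
  set n := Fintype.card G
  have hn : n ≠ 0 := Fintype.card_ne_zero
  have hcard : Multiset.card (univ.val.map (alphaEmb hψ)) = n - 1 := by simp [n]
  rw [alphaEsymm]
  rcases le_or_gt i (n - 1) with hi | hi
  · have hvieta := coeff_eq_esymm_roots_of_card (p := (succPowSubPow n : K[X]))
      (by rw [roots_succPowSubPow hψ, hcard, natDegree_succPowSubPow hn]) (k := n - 1 - i)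
      (by rw [natDegree_succPowSubPow hn]; omega)
    rw [natDegree_succPowSubPow hn, leadingCoeff_succPowSubPow hn, Nat.sub_sub_self hi,
      roots_succPowSubPow hψ, coeff_succPowSubPow, if_neg (by omega),
      Nat.choose_symm_of_eq_add (b := i + 1) (by omega), sub_zero] at hvieta
    have hn' : (n : K) ≠ 0 := Nat.cast_ne_zero.2 hn
    rw [hvieta]
    field_simp
    rw [← pow_mul, pow_mul', neg_one_sq, one_pow, mul_one]
  · rw [Multiset.esymm, Multiset.powersetCard_eq_empty _ (by omega),
      Nat.choose_eq_zero_of_lt (by omega)]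
    simp

open MvPolynomial in
theorem powerSum_eq_newton (hψ : Function.Injective ψ) {k : ℕ} (hk : 0 < k) :
    ψ.powerSum k = (-1) ^ (k + 1) * k * alphaEsymm K (Fintype.card G) k -
      ∑ a ∈ antidiagonal k with a.1 ∈ Set.Ioo 0 k,
        (-1) ^ a.1 * alphaEsymm K (Fintype.card G) a.1 * ψ.powerSum a.2 := by
  have hesymm (i : ℕ) :
      aeval (alphaEmb hψ) (esymm {x : G // x ≠ 0} K i) = alphaEsymm K (Fintype.card G) i := by
    rw [aeval_esymm_eq_multiset_esymm, esymm_alphaEmb]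
  rw [powerSum_eq_aeval_psum hψ hk.ne', psum_eq_mul_esymm_sub_sum _ _ _ hk]
  simp only [map_sub, map_mul, map_pow, map_neg, map_one, map_natCast, map_sum, hesymm]
  congr 1
  refine sum_congr rfl fun a ha => ?_
  have : a.2 ≠ 0 := by
    simp only [mem_filter, HasAntidiagonal.mem_antidiagonal, Set.mem_Ioo] at ha
    omega
  rw [powerSum_eq_aeval_psum hψ this]

end AddChar

def laurentFunctions : Subalgebra ℂ (ℕ → ℂ) where
  carrier := {f | ∃ (N : ℕ) (P : ℂ[X]), ∀ n ≠ 0, f n * (n : ℂ) ^ N = P.eval (n : ℂ)}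
  mul_mem' := by
    rintro f g ⟨N, P, hP⟩ ⟨M, Q, hQ⟩
    refine ⟨N + M, P * Q, fun n hn => ?_⟩
    rw [eval_mul, ← hP n hn, ← hQ n hn, Pi.mul_apply]
    ring
  add_mem' := by
    rintro f g ⟨N, P, hP⟩ ⟨M, Q, hQ⟩
    refine ⟨N + M, P * X ^ M + Q * X ^ N, fun n hn => ?_⟩
    simp only [eval_add, eval_mul, eval_pow, eval_X, ← hP n hn, ← hQ n hn, Pi.add_apply]
    ring
  algebraMap_mem' c := ⟨0, C c, fun n _ => by simp⟩

namespace laurentFunctions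

theorem mem_of_eqOn {f g : ℕ → ℂ} (hg : g ∈ laurentFunctions) (hfg : ∀ n ≠ 0, f n = g n) :
    f ∈ laurentFunctions := by
  obtain ⟨N, P, hP⟩ := hg
  exact ⟨N, P, fun n hn => by rw [hfg n hn, hP n hn]⟩

theorem const_mem (c : ℂ) : (fun _ => c) ∈ laurentFunctions :=
  laurentFunctions.algebraMap_mem c

theorem sum_mem' {ι : Type*} (s : Finset ι) {F : ι → ℕ → ℂ}
    (h : ∀ i ∈ s, F i ∈ laurentFunctions) : (fun n => ∑ i ∈ s, F i n) ∈ laurentFunctions :=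
  sum_fn s F ▸ sum_mem h

theorem natCast_mem : (fun n : ℕ => (n : ℂ)) ∈ laurentFunctions :=
  ⟨0, X, fun n _ => by simp⟩

theorem inv_natCast_mem : (fun n : ℕ => (n : ℂ)⁻¹) ∈ laurentFunctions :=
  ⟨1, 1, fun n hn => by simp [hn]⟩

theorem choose_mem (i : ℕ) : (fun n : ℕ => (n.choose i : ℂ)) ∈ laurentFunctions :=
  ⟨0, C (i.factorial : ℂ)⁻¹ * descPochhammer ℂ i, fun n _ => by
    dsimp only
    rw [pow_zero, mul_one, Nat.cast_choose_eq_descPochhammer_div, eval_mul, eval_C,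
      div_eq_inv_mul]⟩

theorem alphaEsymm_mem (i : ℕ) : (fun n => alphaEsymm ℂ n i) ∈ laurentFunctions :=
  mem_of_eqOn (mul_mem (mul_mem (const_mem _) (choose_mem (i + 1))) inv_natCast_mem)
    fun _ _ => div_eq_mul_inv _ _

theorem exists_sum_zpow {f : ℕ → ℂ} (hf : f ∈ laurentFunctions) :
    ∃ (N : ℕ) (coef : ℤ → ℂ), ∀ n ≠ 0,
      f n = ∑ j ∈ Icc (-(N : ℤ)) N, coef j * (n : ℂ) ^ j := by
  obtain ⟨N, P, hP⟩ := hf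
  set d := P.natDegree
  refine ⟨N + d, fun j => if 0 ≤ j + N then P.coeff (j + N).toNat else 0, fun n hn => ?_⟩
  have hn0 : (n : ℂ) ≠ 0 := Nat.cast_ne_zero.2 hn
  have hsub : (range (d + 1)).image (fun i : ℕ => (i : ℤ) - N) ⊆
      Icc (-((N + d : ℕ) : ℤ)) (N + d : ℕ) := by
    intro j hj
    simp only [mem_image, mem_range] at hj
    simp only [mem_Icc]
    omega
  rw [← sum_subset hsub, sum_image]
  · simp only [sub_add_cancel, Nat.cast_nonneg, if_true, Int.toNat_natCast, zpow_sub₀ hn0,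
      zpow_natCast, ← mul_div_assoc, ← sum_div]
    rw [eq_div_iff (pow_ne_zero _ hn0), hP n hn, eval_eq_sum_range]
  · intro a _ b _ h
    simpa using h
  · intro j _ hj
    rw [mul_eq_zero, ite_eq_right_iff]
    refine .inl fun hj0 => coeff_eq_zero_of_natDegree_lt ?_
    by_contra! hjd
    exact hj (mem_image.2 ⟨(j + N).toNat, mem_range.2 (by omega), by omega⟩)

end laurentFunctions

theorem ZMod.sum_range_natCast {M : Type*} [AddCommMonoid M] (n : ℕ) [NeZero n]
    (g : ZMod n → M) : ∑ b ∈ range n, g b = ∑ x, g x :=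
  sum_nbij' (↑) ZMod.val (by simp) (fun x _ => mem_range.2 x.val_lt)
    (fun _ hb => ZMod.val_cast_of_lt (mem_range.1 hb)) (fun x _ => ZMod.natCast_zmod_val x)
    fun _ _ => rfl

theorem alphaC_eq_alpha_stdAddChar (n : ℕ) [NeZero n] (b : ℤ) :
    alphaC n b = ZMod.stdAddChar.alpha (b : ZMod n) := by
  have hzeta : zeta n ^ b = ZMod.stdAddChar (b : ZMod n) := by
    rw [ZMod.stdAddChar_coe, zeta, ← Complex.exp_int_mul]
    ring_nf
  rw [alphaC, AddChar.alpha, ← hzeta, one_div]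
  split_ifs with h
  · rw [hzeta, (ZMod.intCast_zmod_eq_zero_iff_dvd b n).2 h, AddChar.map_zero_eq_one, sub_self,
      inv_zero]
  · rfl

noncomputable def powerSumFn (k n : ℕ) : ℂ := ∑ b ∈ range n, alphaC n b ^ k

noncomputable def tripleSumFn (k₁ k₂ k₃ n : ℕ) : ℂ :=
  ∑ b₁ ∈ range n, ∑ b₂ ∈ range n,
    alphaC n b₁ ^ k₁ * alphaC n b₂ ^ k₂ * alphaC n ((b₁ : ℤ) + (b₂ : ℤ)) ^ k₃

theorem powerSumFn_eq_powerSum (k n : ℕ) [NeZero n] :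
    powerSumFn k n = (ZMod.stdAddChar : AddChar (ZMod n) ℂ).powerSum k := by
  simp only [powerSumFn, alphaC_eq_alpha_stdAddChar, Int.cast_natCast]
  exact ZMod.sum_range_natCast n (fun x => ZMod.stdAddChar.alpha x ^ k)

theorem tripleSumFn_eq_tripleSum (k₁ k₂ k₃ n : ℕ) [NeZero n] :
    tripleSumFn k₁ k₂ k₃ n = (ZMod.stdAddChar : AddChar (ZMod n) ℂ).tripleSum k₁ k₂ k₃ := by
  simp only [tripleSumFn, alphaC_eq_alpha_stdAddChar, Int.cast_add, Int.cast_natCast]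
  set ψ : AddChar (ZMod n) ℂ := ZMod.stdAddChar
  rw [AddChar.tripleSum, ← ZMod.sum_range_natCast n]
  refine sum_congr rfl fun b _ => ?_
  exact ZMod.sum_range_natCast n
    (fun y => ψ.alpha b ^ k₁ * ψ.alpha y ^ k₂ * ψ.alpha (b + y) ^ k₃)

open laurentFunctions in
theorem powerSumFn_mem (k : ℕ) : powerSumFn k ∈ laurentFunctions := by
  induction k using Nat.strong_induction_on with
  | _ k ih =>
  rcases Nat.eq_zero_or_pos k with rfl | hk
  · exact mem_of_eqOn natCast_mem fun n _ => by simp [powerSumFn]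
  refine mem_of_eqOn (g := fun n => (-1) ^ (k + 1) * k * alphaEsymm ℂ n k -
      ∑ a ∈ antidiagonal k with a.1 ∈ Set.Ioo 0 k,
        (-1) ^ a.1 * alphaEsymm ℂ n a.1 * powerSumFn a.2 n) ?_ fun n hn => ?_
  · refine sub_mem (mul_mem (const_mem _) (alphaEsymm_mem k)) (sum_mem' _ fun a ha =>
      mul_mem (mul_mem (const_mem _) (alphaEsymm_mem _)) (ih a.2 ?_))
    simp only [mem_filter, HasAntidiagonal.mem_antidiagonal, Set.mem_Ioo] at ha
    omega
  · have : NeZero n := ⟨hn⟩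
    simp only [powerSumFn_eq_powerSum]
    rw [AddChar.powerSum_eq_newton ZMod.injective_stdAddChar hk, ZMod.card]

open laurentFunctions in
theorem tripleSumFn_mem : ∀ k₁ k₂ k₃ : ℕ, tripleSumFn k₁ k₂ k₃ ∈ laurentFunctions
  | 0, k₂, k₃ =>
    mem_of_eqOn (mul_mem (powerSumFn_mem k₂) (powerSumFn_mem k₃)) fun n hn => by
      have : NeZero n := ⟨hn⟩
      simp only [tripleSumFn_eq_tripleSum, powerSumFn_eq_powerSum, Pi.mul_apply,
        AddChar.tripleSum_zero_left]
  | k₁ + 1, 0, k₃ =>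
    mem_of_eqOn (mul_mem (powerSumFn_mem (k₁ + 1)) (powerSumFn_mem k₃)) fun n hn => by
      have : NeZero n := ⟨hn⟩
      simp only [tripleSumFn_eq_tripleSum, powerSumFn_eq_powerSum, Pi.mul_apply,
        AddChar.tripleSum_zero_middle]
  | k₁ + 1, k₂ + 1, 0 =>
    mem_of_eqOn (mul_mem (powerSumFn_mem (k₁ + 1)) (powerSumFn_mem (k₂ + 1))) fun n hn => by
      have : NeZero n := ⟨hn⟩
      simp only [tripleSumFn_eq_tripleSum, powerSumFn_eq_powerSum, Pi.mul_apply,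
        AddChar.tripleSum_zero_right]
  | a + 1, b + 1, c + 1 => by
    have hsums (p q : ℕ) :
        (fun n => (0 : ℂ) ^ p * (powerSumFn (q + 1) n + powerSumFn q n)) ∈ laurentFunctions :=
      mul_mem (const_mem _) (add_mem (powerSumFn_mem _) (powerSumFn_mem _))
    refine mem_of_eqOn (sub_mem (sub_mem (add_mem (add_mem (tripleSumFn_mem (a + 1) b (c + 2))
      (tripleSumFn_mem a (b + 1) (c + 2))) (tripleSumFn_mem a b (c + 2)))
      (hsums b (a + c + 2))) (hsums a (b + c + 2))) fun n hn => ?_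
    have : NeZero n := ⟨hn⟩
    simp only [tripleSumFn_eq_tripleSum, powerSumFn_eq_powerSum, Pi.add_apply, Pi.sub_apply]
    exact AddChar.tripleSum_succ_succ_succ ZMod.injective_stdAddChar a b c
termination_by k₁ k₂ => k₁ + k₂

/-- For fixed `k_1, k_2, k_3` there is a Laurent polynomial `L` with complex coefficients
such that for all `n ≥ 2`,
`∑_{b_1=0}^{n-1} ∑_{b_2=0}^{n-1} α_{n,b_1}^{k_1} α_{n,b_2}^{k_2} α_{n,b_1+b_2}^{k_3} = L(n)`. -/
theorem double_sum_alpha_laurent (k1 k2 k3 : ℕ) :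
    ∃ (N : ℕ) (coef : ℤ → ℂ), ∀ n : ℕ, 2 ≤ n →
      ∑ b1 ∈ Finset.range n, ∑ b2 ∈ Finset.range n,
        alphaC n (b1 : ℤ) ^ k1 * alphaC n (b2 : ℤ) ^ k2 * alphaC n ((b1 : ℤ) + (b2 : ℤ)) ^ k3 =
      ∑ j ∈ Finset.Icc (-(N : ℤ)) (N : ℤ), coef j * (n : ℂ) ^ j := by
  obtain ⟨N, coef, h⟩ := laurentFunctions.exists_sum_zpow (tripleSumFn_mem k1 k2 k3)
  exact ⟨N, coef, fun n hn => h n (by omega)⟩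
end
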